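/- Let n ≥ 3 and r > 0. Suppose φ is continuous on {x ∈ ℝⁿ : |x| ≥ r}, harmonic on {|x| > r}, bounded, vanishes on the sphere {|x| = r}, and satisfies φ(x) → 1 as |x| → ∞. Then φ(x) = 1 − (r/|x|)^{n−2} for all |x| ≥ r. -/

import Mathlib

open Set Filter

/-- The Laplacian of `f : ℝⁿ → ℝ`, as the sum of second partial derivatives
in the coordinate directions. -/
noncomputable def lap (n : ℕ) (f : EuclideanSpace ℝ (Fin n) → ℝ)
    (x : EuclideanSpace ℝ (Fin n)) : ℝ :=
  ∑ i : Fin n, fderiv ℝ (fun y => fderiv ℝ f y (EuclideanSpace.single i 1)) x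
      (EuclideanSpace.single i 1)

/-!
The difference `u = φ - (1 - (r / ‖x‖) ^ (n - 2))` is harmonic outside the ball, because
`‖x‖ ^ (2 - n)` is harmonic away from `0`; it vanishes on the sphere `‖x‖ = r` and tends to `0`
at infinity. The weak maximum principle on an annulus `r ≤ ‖x‖ ≤ R`, applied to `u` and `-u` with
`R` so large that `|u| ≤ δ` on `‖x‖ = R`, gives `|u| ≤ δ` for every `δ > 0`, so `u = 0`.

The maximum principle is proved by perturbation: `u + ε‖x‖²` has Laplacian `Δu + 2εn > 0`, while
at an interior maximum every second directional derivative, hence the Laplacian, is `≤ 0`. So the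
maximum of `u + ε‖x‖²` is attained on the boundary, and then `ε → 0`.
-/

open Topology InnerProductSpace Laplacian Module
open scoped RealInnerProductSpace

theorem IsLocalMax.deriv_deriv_nonpos {f : ℝ → ℝ} {a : ℝ} (h : IsLocalMax f a)
    (hc : ContinuousAt f a) : deriv (deriv f) a ≤ 0 := by
  by_contra! hpos
  -- `a` would also be a local minimum, so `f` would be locally constant.
  have hconst : f =ᶠ[𝓝 a] fun _ => f a :=
    (h.and (isLocalMin_of_deriv_deriv_pos hpos h.deriv_eq_zero hc)).mono
      fun _ hx => le_antisymm hx.1 hx.2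
  have hderiv : deriv f =ᶠ[𝓝 a] fun _ => 0 := by
    filter_upwards [hconst.eventuallyEq_nhds] with x hx
    rw [hx.deriv_eq, deriv_const]
  rw [hderiv.deriv_eq, deriv_const] at hpos
  exact hpos.false

theorem Real.rpow_two_sub_natCast {ρ : ℝ} (hρ : 0 ≤ ρ) {n : ℕ} (hn : 2 ≤ n) :
    ρ ^ (2 - n : ℝ) = (ρ ^ (n - 2))⁻¹ := by
  rw [← Real.rpow_natCast, Nat.cast_sub hn, ← Real.rpow_neg hρ]
  push_cast
  ring_nf

theorem tendsto_div_norm_pow_cocompact {E : Type*} [NormedAddCommGroup E] [ProperSpace E]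
    (r : ℝ) {m : ℕ} (hm : m ≠ 0) :
    Tendsto (fun y : E => (r / ‖y‖) ^ m) (cocompact E) (𝓝 0) := by
  simpa [zero_pow hm] using
    ((tendsto_const_nhds (x := r)).div_atTop tendsto_norm_cocompact_atTop).pow m

section NormedSpace

variable {E F : Type*} [NormedAddCommGroup E] [NormedSpace ℝ E] [NormedAddCommGroup F]
  [NormedSpace ℝ F]

theorem ContDiffAt.hasFDerivAt_fderiv_apply {f : E → F} {x : E} (hf : ContDiffAt ℝ 2 f x)
    (v : E) :
    HasFDerivAt (fun y => fderiv ℝ f y v)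
      ((ContinuousLinearMap.apply ℝ F v).comp (fderiv ℝ (fderiv ℝ f) x)) x :=
  (ContinuousLinearMap.apply ℝ F v).hasFDerivAt.comp x
    ((hf.fderiv_right (m := 1) (by norm_num)).differentiableAt one_ne_zero).hasFDerivAt

theorem IsLocalMax.iteratedFDeriv_two_nonpos {f : E → ℝ} {x : E} (h : IsLocalMax f x)
    (hf : ContDiffAt ℝ 2 f x) (v : E) : iteratedFDeriv ℝ 2 f x ![v, v] ≤ 0 := by
  obtain ⟨line, hline_def⟩ : ∃ line : ℝ → E, line = fun t => x + t • v := ⟨_, rfl⟩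
  have hline : ∀ t, HasDerivAt line v t := fun t => by
    simpa [hline_def] using ((hasDerivAt_id t).smul_const v).const_add x
  have hline_cont : Continuous line := by rw [hline_def]; fun_prop
  have hline0 : line 0 = x := by simp [hline_def]
  have hf_near : ∀ᶠ t in 𝓝 0, ContDiffAt ℝ 2 f (line t) :=
    hline_cont.continuousAt.tendsto.eventually (hline0 ▸ hf.eventually (by simp))
  have hderiv : deriv (f ∘ line) =ᶠ[𝓝 0] fun t => fderiv ℝ f (line t) v :=
    hf_near.mono fun t ht =>
      ((ht.differentiableAt two_ne_zero).hasFDerivAt.comp_hasDerivAt t (hline t)).deriv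
  have hsecond :
      HasDerivAt (fun t => fderiv ℝ f (line t) v) (fderiv ℝ (fderiv ℝ f) x v v) 0 := by
    rw [← hline0] at hf ⊢
    exact (hf.hasFDerivAt_fderiv_apply v).comp_hasDerivAt (0 : ℝ) (hline 0)
  have hmax : IsLocalMax (f ∘ line) 0 := (hline0 ▸ h).comp_continuous hline_cont.continuousAt
  have hcont : ContinuousAt (f ∘ line) 0 :=
    (hline0 ▸ hf.continuousAt).comp hline_cont.continuousAt
  rw [iteratedFDeriv_two_apply]
  simpa [hderiv.deriv_eq, hsecond.deriv] using hmax.deriv_deriv_nonpos hcont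

theorem interior_annulus_subset {r : ℝ} (hr : r ≠ 0) (R : ℝ) :
    interior {y : E | r ≤ ‖y‖ ∧ ‖y‖ ≤ R} ⊆ {y | r < ‖y‖} := by
  intro y hy
  have : y ∈ interior (Metric.ball 0 r)ᶜ := interior_mono (fun z hz => by simpa using hz.1) hy
  rw [interior_compl, closure_ball _ hr] at this
  simpa using this

theorem frontier_annulus_subset {r R : ℝ} (hr : r ≠ 0) (hR : R ≠ 0) :
    frontier {y : E | r ≤ ‖y‖ ∧ ‖y‖ ≤ R} ⊆ Metric.sphere 0 r ∪ Metric.sphere 0 R := by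
  have hK : {y : E | r ≤ ‖y‖ ∧ ‖y‖ ≤ R} = (Metric.ball 0 r)ᶜ ∩ Metric.closedBall 0 R := by
    ext; simp
  rw [hK]
  refine (frontier_inter_subset _ _).trans (union_subset_union ?_ ?_)
  · exact inter_subset_left.trans (by rw [frontier_compl, frontier_ball _ hr])
  · exact inter_subset_right.trans (by rw [frontier_closedBall _ hR])

end NormedSpace

section InnerProductSpace

variable {E : Type*} [NormedAddCommGroup E] [InnerProductSpace ℝ E]

theorem contDiffAt_div_norm_pow {k : WithTop ℕ∞} (r : ℝ) (m : ℕ) {x : E} (hx : x ≠ 0) :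
    ContDiffAt ℝ k (fun y : E => (r / ‖y‖) ^ m) x :=
  (contDiffAt_const.div (contDiffAt_norm ℝ hx) (norm_ne_zero_iff.mpr hx)).pow m

variable [FiniteDimensional ℝ E]

theorem IsLocalMax.laplacian_nonpos {f : E → ℝ} {x : E} (h : IsLocalMax f x)
    (hf : ContDiffAt ℝ 2 f x) : Δ f x ≤ 0 := by
  rw [laplacian_eq_iteratedFDeriv_stdOrthonormalBasis]
  exact Finset.sum_nonpos fun i _ => h.iteratedFDeriv_two_nonpos hf _

theorem laplacian_comp_norm_sq {g g' : ℝ → ℝ} {g'' : ℝ} {x : E}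
    (hg : ∀ᶠ t in 𝓝 (‖x‖ ^ 2), HasDerivAt g (g' t) t) (hg' : HasDerivAt g' g'' (‖x‖ ^ 2)) :
    Δ (fun y : E => g (‖y‖ ^ 2)) x = 4 * ‖x‖ ^ 2 * g'' + 2 * finrank ℝ E * g' (‖x‖ ^ 2) := by
  have hnorm_sq : ∀ y : E, HasFDerivAt (fun y : E => ‖y‖ ^ 2) (2 • innerSL ℝ y) y :=
    fun y => (hasStrictFDerivAt_norm_sq y).hasFDerivAt
  have hfirst : fderiv ℝ (fun y => g (‖y‖ ^ 2)) =ᶠ[𝓝 x]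
      fun y => (2 * g' (‖y‖ ^ 2)) • innerSL ℝ y := by
    filter_upwards [((show Continuous fun y : E => ‖y‖ ^ 2 by fun_prop).tendsto x).eventually hg]
      with y hy
    refine (hy.comp_hasFDerivAt y (hnorm_sq y)).fderiv.trans ?_
    ext v
    simp only [smul_apply, coe_innerSL_apply, nsmul_eq_mul, Nat.cast_ofNat, smul_eq_mul]
    ring
  have hsecond : ∀ v : E, iteratedFDeriv ℝ 2 (fun y => g (‖y‖ ^ 2)) x ![v, v] =
      4 * g'' * ⟪x, v⟫ ^ 2 + 2 * g' (‖x‖ ^ 2) * ‖v‖ ^ 2 := by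
    intro v
    have hd : HasFDerivAt (fun y : E => (2 * g' (‖y‖ ^ 2)) • innerSL ℝ y) _ x :=
      ((hg'.comp_hasFDerivAt x (hnorm_sq x)).const_mul 2).smul (innerSL ℝ (E := E)).hasFDerivAt
    rw [iteratedFDeriv_two_apply, hfirst.fderiv_eq, hd.fderiv]
    simp only [Function.comp_apply, Fin.isValue, Matrix.cons_val_zero, Matrix.cons_val_one,
      Matrix.cons_val_fin_one, add_apply, smul_apply, ContinuousLinearMap.smulRight_apply,
      coe_innerSL_apply, nsmul_eq_mul, Nat.cast_ofNat, smul_eq_mul]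
    rw [innerSL_apply_apply, real_inner_self_eq_norm_sq]
    ring
  have hcoord : ∑ i, ⟪x, stdOrthonormalBasis ℝ E i⟫ ^ 2 = ‖x‖ ^ 2 := by
    simpa [sq_abs] using (stdOrthonormalBasis ℝ E).sum_sq_norm_inner_left x
  rw [laplacian_eq_iteratedFDeriv_stdOrthonormalBasis]
  simp only [hsecond, Finset.sum_add_distrib, ← Finset.mul_sum, hcoord,
    OrthonormalBasis.norm_eq_one, one_pow, Finset.sum_const, Finset.card_univ, Fintype.card_fin,
    nsmul_eq_mul, mul_one]
  ring

theorem laplacian_norm_sq (x : E) : Δ (fun y : E => ‖y‖ ^ 2) x = 2 * finrank ℝ E := by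
  simpa using laplacian_comp_norm_sq (g := id) (g' := fun _ => 1) (g'' := 0) (x := x)
    (Eventually.of_forall hasDerivAt_id) (hasDerivAt_const _ _)

theorem laplacian_norm_sq_rpow {x : E} (hx : x ≠ 0) (c : ℝ) :
    Δ (fun y : E => (‖y‖ ^ 2) ^ c) x =
      2 * c * (2 * c - 2 + finrank ℝ E) * (‖x‖ ^ 2) ^ (c - 1) := by
  have hpos : 0 < ‖x‖ ^ 2 := by positivity
  have hg : ∀ᶠ t in 𝓝 (‖x‖ ^ 2), HasDerivAt (· ^ c) (c * t ^ (c - 1)) t :=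
    (eventually_gt_nhds hpos).mono fun t ht => Real.hasDerivAt_rpow_const (Or.inl ht.ne')
  rw [laplacian_comp_norm_sq hg ((Real.hasDerivAt_rpow_const (Or.inl hpos.ne')).const_mul c),
    Real.rpow_sub_one hpos.ne' (c - 1)]
  field_simp
  ring

theorem laplacian_norm_rpow_two_sub_finrank {x : E} (hx : x ≠ 0) :
    Δ (fun y : E => ‖y‖ ^ (2 - finrank ℝ E : ℝ)) x = 0 := by
  have hsq : (fun y : E => ‖y‖ ^ (2 - finrank ℝ E : ℝ)) =
      fun y => (‖y‖ ^ 2) ^ ((2 - finrank ℝ E : ℝ) / 2) := by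
    funext y
    rw [← Real.rpow_natCast, ← Real.rpow_mul (norm_nonneg y)]
    congr 1
    ring
  rw [hsq, laplacian_norm_sq_rpow hx]
  ring

theorem laplacian_div_norm_pow_finrank_sub_two (hE : 2 ≤ finrank ℝ E) (r : ℝ) {x : E}
    (hx : x ≠ 0) : Δ (fun y : E => (r / ‖y‖) ^ (finrank ℝ E - 2)) x = 0 := by
  have hsmul : (fun y : E => (r / ‖y‖) ^ (finrank ℝ E - 2)) =
      r ^ (finrank ℝ E - 2) • fun y => ‖y‖ ^ (2 - finrank ℝ E : ℝ) := by
    funext y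
    simp [Real.rpow_two_sub_natCast (norm_nonneg y) hE, div_eq_mul_inv, mul_pow]
  rw [hsmul, laplacian_smul _ ((contDiffAt_norm ℝ hx).rpow_const_of_ne (norm_ne_zero_iff.mpr hx)),
    laplacian_norm_rpow_two_sub_finrank hx, smul_zero]

variable [Nontrivial E]

theorem IsCompact.le_of_forall_frontier_le {K : Set E} (hK : IsCompact K)
    {f : E → ℝ} (hfK : ContinuousOn f K) (hf : ∀ x ∈ interior K, ContDiffAt ℝ 2 f x)
    (hΔ : ∀ x ∈ interior K, 0 ≤ Δ f x) {m : ℝ} (hm : ∀ x ∈ frontier K, f x ≤ m) {x : E}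
    (hx : x ∈ K) : f x ≤ m := by
  obtain ⟨C, hC⟩ := hK.isBounded.exists_norm_le
  have hq : ContDiff ℝ 2 fun y : E => ‖y‖ ^ 2 := contDiff_norm_sq ℝ
  have hε : ∀ ε > 0, f x ≤ m + ε * C ^ 2 := by
    intro ε hε
    set w := f + ε • fun y : E => ‖y‖ ^ 2 with hw
    have hw_apply : ∀ y, w y = f y + ε * ‖y‖ ^ 2 := fun y => rfl
    have hεq : ∀ y, ContDiffAt ℝ 2 (ε • fun y : E => ‖y‖ ^ 2) y :=
      fun y => hq.contDiffAt.const_smul ε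
    obtain ⟨x₀, hx₀K, hx₀max⟩ :=
      hK.exists_isMaxOn ⟨x, hx⟩ (hfK.add (by fun_prop) : ContinuousOn w K)
    have hx₀ : x₀ ∈ frontier K := by
      rw [hK.isClosed.frontier_eq]
      refine ⟨hx₀K, fun hint => ?_⟩
      have hmax : IsLocalMax w x₀ := hx₀max.isLocalMax (mem_interior_iff_mem_nhds.mp hint)
      have hΔw : Δ w x₀ = Δ f x₀ + ε * (2 * finrank ℝ E) := by
        rw [hw, (hf x₀ hint).laplacian_add (hεq x₀), laplacian_smul _ hq.contDiffAt,
          laplacian_norm_sq, smul_eq_mul]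
      have hdim : (0 : ℝ) < finrank ℝ E := by exact_mod_cast Module.finrank_pos
      have := hmax.laplacian_nonpos ((hf x₀ hint).add (hεq x₀))
      nlinarith [hΔ x₀ hint]
    calc f x ≤ w x := by rw [hw_apply]; nlinarith [sq_nonneg ‖x‖]
      _ ≤ w x₀ := hx₀max hx
      _ ≤ m + ε * C ^ 2 := by
        rw [hw_apply]
        gcongr
        · exact hm x₀ hx₀
        · exact hC x₀ hx₀K
  have hlim : Tendsto (fun ε : ℝ => m + ε * C ^ 2) (𝓝[>] 0) (𝓝 m) := by
    have : Continuous fun ε : ℝ => m + ε * C ^ 2 := by fun_prop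
    simpa using (this.tendsto 0).mono_left nhdsWithin_le_nhds
  exact ge_of_tendsto hlim (eventually_nhdsWithin_of_forall hε)

theorem IsCompact.abs_le_of_forall_frontier_abs_le {K : Set E} (hK : IsCompact K)
    {f : E → ℝ} (hfK : ContinuousOn f K) (hf : ∀ x ∈ interior K, ContDiffAt ℝ 2 f x)
    (hΔ : ∀ x ∈ interior K, Δ f x = 0) {m : ℝ} (hm : ∀ x ∈ frontier K, |f x| ≤ m) {x : E}
    (hx : x ∈ K) : |f x| ≤ m := by
  refine abs_le.mpr ⟨?_, hK.le_of_forall_frontier_le hfK hf (fun y hy => (hΔ y hy).ge)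
    (fun y hy => (abs_le.mp (hm y hy)).2) hx⟩
  have hneg := hK.le_of_forall_frontier_le (f := -f) hfK.neg (fun y hy => (hf y hy).neg)
    (fun y hy => by simp [laplacian_neg, hΔ y hy])
    (fun y hy => neg_le.mp (abs_le.mp (hm y hy)).1) hx
  simp only [Pi.neg_apply] at hneg
  linarith

theorem eq_zero_of_laplacian_eq_zero_of_tendsto_cocompact {r : ℝ} (hr : 0 < r) {f : E → ℝ}
    (hfc : ContinuousOn f {y | r ≤ ‖y‖}) (hf : ∀ y, r < ‖y‖ → ContDiffAt ℝ 2 f y)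
    (hΔ : ∀ y, r < ‖y‖ → Δ f y = 0) (hsphere : ∀ y, ‖y‖ = r → f y = 0)
    (hlim : Tendsto f (cocompact E) (𝓝 0)) {x : E} (hx : r ≤ ‖x‖) : f x = 0 := by
  refine abs_nonpos_iff.mp (le_of_forall_pos_le_add fun δ hδ => ?_)
  obtain ⟨R₀, -, hR₀⟩ := hasBasis_cobounded_norm.eventually_iff.mp <|
    Metric.cobounded_eq_cocompact (α := E) ▸ hlim.eventually (eventually_abs_sub_lt 0 hδ)
  set R := max R₀ ‖x‖ + r
  have hrR : r < R := by have := le_max_right R₀ ‖x‖; linarith [norm_nonneg x]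
  have hK : IsCompact {y : E | r ≤ ‖y‖ ∧ ‖y‖ ≤ R} :=
    (isCompact_closedBall (0 : E) R).of_isClosed_subset
      ((isClosed_le continuous_const continuous_norm).inter
        (isClosed_le continuous_norm continuous_const))
      fun y hy => by simpa using hy.2
  have hint := interior_annulus_subset (E := E) hr.ne' R
  rw [zero_add]
  refine hK.abs_le_of_forall_frontier_abs_le (hfc.mono fun y hy => hy.1)
    (fun y hy => hf y (hint hy)) (fun y hy => hΔ y (hint hy)) (fun y hy => ?_)
    ⟨hx, by have := le_max_right R₀ ‖x‖; linarith⟩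
  rcases frontier_annulus_subset hr.ne' (hr.trans hrR).ne' hy with hy | hy
  · rw [hsphere y (by simpa using hy), abs_zero]; exact hδ.le
  · have hRy : R₀ ≤ ‖y‖ := by
      rw [mem_sphere_zero_iff_norm.mp hy]; have := le_max_left R₀ ‖x‖; linarith
    simpa using (hR₀ hRy).le

end InnerProductSpace

theorem lap_eq_laplacian {n : ℕ} {f : EuclideanSpace ℝ (Fin n) → ℝ}
    {x : EuclideanSpace ℝ (Fin n)} (hf : ContDiffAt ℝ 2 f x) : lap n f x = Δ f x := by
  rw [laplacian_eq_iteratedFDeriv_orthonormalBasis f (EuclideanSpace.basisFun (Fin n) ℝ)]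
  refine Finset.sum_congr rfl fun i _ => ?_
  rw [iteratedFDeriv_two_apply, (hf.hasFDerivAt_fderiv_apply _).fderiv]
  simp

theorem exterior_dirichlet_uniqueness_general {n : ℕ} (hn : 3 ≤ n) (r : ℝ) (hr : 0 < r)
    (φ : EuclideanSpace ℝ (Fin n) → ℝ)
    (hcont : ContinuousOn φ {x : EuclideanSpace ℝ (Fin n) | r ≤ ‖x‖})
    (hC2 : ContDiffOn ℝ 2 φ {x : EuclideanSpace ℝ (Fin n) | r < ‖x‖})
    (hharm : ∀ x : EuclideanSpace ℝ (Fin n), r < ‖x‖ → lap n φ x = 0)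
    (hzero : ∀ x : EuclideanSpace ℝ (Fin n), ‖x‖ = r → φ x = 0)
    (hlim : Tendsto φ (cocompact (EuclideanSpace ℝ (Fin n))) (nhds 1)) :
    ∀ x : EuclideanSpace ℝ (Fin n), r ≤ ‖x‖ → φ x = 1 - (r / ‖x‖) ^ (n - 2) := by
  -- provides the `Nontrivial` instance the maximum principle needs
  have : Nonempty (Fin n) := ⟨⟨0, by omega⟩⟩
  set w : EuclideanSpace ℝ (Fin n) → ℝ := fun y => (r / ‖y‖) ^ (n - 2)
  set u := (φ - fun _ => 1) + w
  have hφ2 : ∀ y, r < ‖y‖ → ContDiffAt ℝ 2 φ y := fun y hy =>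
    hC2.contDiffAt ((isOpen_lt continuous_const continuous_norm).mem_nhds hy)
  have hφ1 : ∀ y, r < ‖y‖ → ContDiffAt ℝ 2 (φ - fun _ => 1) y := fun y hy =>
    (hφ2 y hy).sub contDiffAt_const
  have hw2 : ∀ y, r ≤ ‖y‖ → ContDiffAt ℝ 2 w y := fun y hy =>
    contDiffAt_div_norm_pow r _ (norm_pos_iff.mp (hr.trans_le hy))
  have hΔu : ∀ y, r < ‖y‖ → Δ u y = 0 := fun y hy => by
    have hΔw : Δ w y = 0 := by
      simpa using laplacian_div_norm_pow_finrank_sub_two (E := EuclideanSpace ℝ (Fin n))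
        (by simp; omega) r (norm_pos_iff.mp (hr.trans hy))
    rw [(hφ1 y hy).laplacian_add (hw2 y hy.le), (hφ2 y hy).laplacian_sub contDiffAt_const,
      ← lap_eq_laplacian (hφ2 y hy), hharm y hy, hΔw]
    simp
  have hucont : ContinuousOn u {y | r ≤ ‖y‖} :=
    (hcont.sub continuousOn_const).add
      (continuousOn_of_forall_continuousAt fun y hy => (hw2 y hy).continuousAt)
  have hulim : Tendsto u (cocompact _) (𝓝 0) := by
    have := (hlim.sub_const 1).add (tendsto_div_norm_pow_cocompact r (by omega : n - 2 ≠ 0))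
    rwa [sub_self, add_zero] at this
  intro x hx
  have hux := eq_zero_of_laplacian_eq_zero_of_tendsto_cocompact hr hucont
    (fun y hy => (hφ1 y hy).add (hw2 y hy.le)) hΔu
    (fun y hy => by simp [u, w, hzero y hy, hy, hr.ne']) hulim hx
  simp only [u, w, Pi.add_apply, Pi.sub_apply] at hux
  linarith

/-- For `n ≥ 3`, `r > 0`: if `φ` is continuous on `{|x| ≥ r}`, harmonic on `{|x| > r}`,
bounded there, vanishes on the sphere `{|x| = r}` and tends to `1` at infinity,
then `φ(x) = 1 - (r/|x|)^{n-2}` for all `|x| ≥ r`. -/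
theorem exterior_dirichlet_uniqueness {n : ℕ} (hn : 3 ≤ n) (r : ℝ) (hr : 0 < r)
    (φ : EuclideanSpace ℝ (Fin n) → ℝ)
    (hcont : ContinuousOn φ {x : EuclideanSpace ℝ (Fin n) | r ≤ ‖x‖})
    (hC2 : ContDiffOn ℝ 2 φ {x : EuclideanSpace ℝ (Fin n) | r < ‖x‖})
    (hharm : ∀ x : EuclideanSpace ℝ (Fin n), r < ‖x‖ → lap n φ x = 0)
    (hbdd : ∃ M : ℝ, ∀ x : EuclideanSpace ℝ (Fin n), r ≤ ‖x‖ → |φ x| ≤ M)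
    (hzero : ∀ x : EuclideanSpace ℝ (Fin n), ‖x‖ = r → φ x = 0)
    (hlim : Tendsto φ (cocompact (EuclideanSpace ℝ (Fin n))) (nhds 1)) :
    ∀ x : EuclideanSpace ℝ (Fin n), r ≤ ‖x‖ → φ x = 1 - (r / ‖x‖) ^ (n - 2) :=
  exterior_dirichlet_uniqueness_general hn r hr φ hcont hC2 hharm hzero hlim
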